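/- For every integer k ≥ 2 and every n ≥ 1, the strip entropy has the closed form h_n^{(k)} = ((k−1)/k)·log 2 + (k−1)·Σ_{i=1}^{n−1} (1/k^{i+1})·log(1+r_{i−1}^k) + (1/k^n)·log c_{n−1}. -/

import Mathlib

/-- `(B_n(0), B_n(1))` for hard-core labelings of the complete rooted `k`-ary tree. -/
noncomputable def Bp (k : ℕ) : ℕ → ℝ × ℝ
  | 0 => (1, 1)
  | n + 1 => (((Bp k n).1 + (Bp k n).2) ^ k, (Bp k n).1 ^ k)

/-- `B_n = B_n(0) + B_n(1)`. -/
noncomputable def Bt (k n : ℕ) : ℝ := (Bp k n).1 + (Bp k n).2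

/-- `r_n = B_n(0) / B_n`. -/
noncomputable def rt (k n : ℕ) : ℝ := (Bp k n).1 / Bt k n

/-- `c_n = (1 + √(1 + 4 r_n^{k−1}))/2`. -/
noncomputable def ct (k n : ℕ) : ℝ := (1 + Real.sqrt (1 + 4 * rt k n ^ (k - 1))) / 2

/-- `λ_n = B_n^{k−1} c_n`. -/
noncomputable def lamt (k n : ℕ) : ℝ := Bt k n ^ (k - 1) * ct k n

/-- `h_n^{(k)} = log λ_{n−1} / kⁿ`, the site-specific strip entropy (for `n ≥ 1`). -/
noncomputable def hstrip (k n : ℕ) : ℝ := Real.log (lamt k (n - 1)) / (k : ℝ) ^ n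

lemma Bp_pos (k n : ℕ) : 0 < (Bp k n).1 ∧ 0 < (Bp k n).2 := by
  induction n with
  | zero => simp [Bp]
  | succ n ih =>
      exact ⟨pow_pos (by linarith [ih.1, ih.2]) k, pow_pos ih.1 k⟩

lemma Bt_pos (k n : ℕ) : 0 < Bt k n := add_pos (Bp_pos k n).1 (Bp_pos k n).2

lemma ct_pos (k n : ℕ) : 0 < ct k n := by
  unfold ct
  have := Real.sqrt_nonneg (1 + 4 * rt k n ^ (k - 1))
  linarith

lemma rt_pos (k n : ℕ) : 0 < rt k n := div_pos (Bp_pos k n).1 (Bt_pos k n)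

lemma log_Bt_succ (k m : ℕ) :
    Real.log (Bt k (m + 1)) = k * Real.log (Bt k m) + Real.log (1 + rt k m ^ k) := by
  have hB := Bt_pos k m
  have h0 := (Bp_pos k m).1
  have key : Bt k (m + 1) = Bt k m ^ k * (1 + rt k m ^ k) := by
    show (Bp k (m + 1)).1 + (Bp k (m + 1)).2 = _
    simp only [Bp, rt, div_pow]
    rw [mul_add, mul_one, mul_div_cancel₀ _ (pow_ne_zero k hB.ne')]
    rfl
  have hr := rt_pos k m
  have h1 : (0 : ℝ) < 1 + rt k m ^ k := by positivity
  rw [key, Real.log_mul (pow_ne_zero k hB.ne') h1.ne', Real.log_pow]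

lemma logB_closed (k : ℕ) (m : ℕ) :
    Real.log (Bt k m) / (k : ℝ) ^ (m + 1) =
      Real.log 2 / k +
        ∑ i ∈ Finset.range m, Real.log (1 + rt k i ^ k) / (k : ℝ) ^ (i + 2) := by
  by_cases hk : k = 0
  · subst hk
    simp
  have hkpos : (0 : ℝ) < k := by positivity
  induction m with
  | zero =>
      simp [Bt, Bp]
      norm_num
  | succ m ih =>
      rw [log_Bt_succ, Finset.sum_range_succ, ← add_assoc, ← ih]
      have h1 : ((k : ℝ)) ^ (m + 1) ≠ 0 := by positivity
      have h2 : ((k : ℝ)) ^ (m + 2) ≠ 0 := by positivity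
      field_simp
      ring

/-- Closed form for the strip entropies, for `n ≥ 1`:
`h_n = ((k−1)/k) log 2 + (k−1) Σ_{i=1}^{n−1} (1/k^{i+1}) log(1+r_{i−1}^k) + (1/kⁿ) log c_{n−1}`
(the sum below is reindexed by `i ↦ i+1`). -/
theorem strip_entropy_closed_form (k : ℕ) (hk : 2 ≤ k) (n : ℕ) (hn : 1 ≤ n) :
    hstrip k n =
      ((k : ℝ) - 1) / k * Real.log 2
        + ((k : ℝ) - 1) *
            ∑ i ∈ Finset.range (n - 1), 1 / (k : ℝ) ^ (i + 2) * Real.log (1 + rt k i ^ k)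
        + 1 / (k : ℝ) ^ n * Real.log (ct k (n - 1)) := by
  obtain ⟨m, rfl⟩ : ∃ m, n = m + 1 := ⟨n - 1, (Nat.succ_pred_eq_of_pos hn).symm⟩
  have hkpos : (0 : ℝ) < k := by positivity
  have hB := Bt_pos k m
  have hc := ct_pos k m
  have hlog : Real.log (lamt k m) =
      ((k : ℝ) - 1) * Real.log (Bt k m) + Real.log (ct k m) := by
    rw [lamt, Real.log_mul (pow_ne_zero _ hB.ne') hc.ne', Real.log_pow]
    have : ((k - 1 : ℕ) : ℝ) = (k : ℝ) - 1 := by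
      have : 1 ≤ k := by omega
      push_cast [Nat.cast_sub this]
      ring
    rw [this]
  have hclosed := logB_closed k m
  have hsum : ∑ i ∈ Finset.range m, 1 / (k : ℝ) ^ (i + 2) * Real.log (1 + rt k i ^ k) =
      ∑ i ∈ Finset.range m, Real.log (1 + rt k i ^ k) / (k : ℝ) ^ (i + 2) := by
    apply Finset.sum_congr rfl
    intro i _
    ring
  simp only [hstrip, Nat.add_sub_cancel, hlog, hsum]
  rw [add_div, mul_div_assoc, hclosed]
  have h1 : ((k : ℝ)) ^ (m + 1) ≠ 0 := by positivity
  field_simp
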